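/- arXiv:math/0511135 — 3 statements merged into one kernel-verified Lean document; each statement's English description precedes it below -/
import Mathlib

section
/- For a finite group Γ, an integer q, and any function e : Γ → ℕ that is constant on conjugacy classes, one has (1/|Γ|) · Σ_{(g,h) ∈ Γ×Γ, h g h⁻¹ = g^q} t^{e(g)} = Σ_{C} t^{e(C)}, where the right-hand sum runs over the conjugacy classes C of Γ that are stable under the map x ↦ x^q, t is any element of a commutative ring (or ℚ), and e(C) denotes the common value of e on C. -/
/-!
For fixed `g`, the elements `h` with `h g h⁻¹ = g^q` form a coset of the centralizer of `g` when
`g^q` is conjugate to `g`, and there are none otherwise. Summing the centralizer orders over a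
conjugacy class gives `|Γ|` by orbit–stabilizer, so after dividing by `|Γ|` each stable class
contributes `t^{e(C)}` once and every other class contributes nothing.
-/

open scoped Classical

open Finset MulAction

namespace MulAction

variable {G α : Type*} [Group G] [MulAction G α] [Fintype G]

theorem card_filter_smul_eq_of_mem_orbit {a b a' b' : α} (ha : a' ∈ orbit G a)
    (hb : b' ∈ orbit G b) : #{g : G | g • a' = b'} = #{g : G | g • a = b} := by
  obtain ⟨x, rfl⟩ := ha
  obtain ⟨y, rfl⟩ := hb
  refine card_nbij' (fun g => y⁻¹ * g * x) (fun g => y * g * x⁻¹) ?_ ?_ ?_ ?_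
  · intro g hg
    simp_all [mul_smul]
  · intro g hg
    simp_all [mul_smul]
  · intro g _
    simp [mul_assoc]
  · intro g _
    simp [mul_assoc]

theorem card_filter_smul_eq_of_notMem_orbit {a b : α} (h : b ∉ orbit G a) :
    #{g : G | g • a = b} = 0 := by
  simpa using fun g hg => h ⟨g, hg⟩

theorem sum_card_filter_smul_eq_of_mapsTo_orbit [Fintype α] (a : α) {φ : α → α}
    (hφ : ∀ b ∈ orbit G a, φ b ∈ orbit G a) :
    ∑ b with b ∈ orbit G a, #{g : G | g • b = φ b} = Fintype.card G := by
  have hterm : ∀ b ∈ ({b | b ∈ orbit G a} : Finset α),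
      #{g : G | g • b = φ b} = #{g : G | g • a = b} := by
    intro b hb
    rw [mem_filter_univ] at hb
    refine card_filter_smul_eq_of_mem_orbit hb ?_
    rw [orbit_eq_iff.mpr hb]
    exact hφ b hb
  rw [sum_congr rfl hterm, ← card_univ]
  exact (card_eq_sum_card_fiberwise fun g _ => by simp).symm

end MulAction

theorem IsConj.zpow {G : Type*} [Group G] {a b : G} (n : ℤ) (h : IsConj a b) :
    IsConj (a ^ n) (b ^ n) := by
  obtain ⟨c, hc⟩ := isConj_iff.mp h
  exact isConj_iff.mpr ⟨c, by rw [← hc, conj_zpow]⟩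

/-- `ConjAct Γ` acts on `Γ` by `h • g = h * g * h⁻¹` definitionally, so the orbit lemmas apply
to these counts as they stand. -/
theorem ConjClasses.sum_card_filter_conj_eq_zpow {Γ : Type*} [Group Γ] [Fintype Γ]
    (C : ConjClasses Γ) (q : ℤ) :
    ∑ g with ConjClasses.mk g = C, #{h : Γ | h * g * h⁻¹ = g ^ q} =
      if ∀ g : Γ, ConjClasses.mk g = C → ConjClasses.mk (g ^ q) = C
      then Fintype.card Γ else 0 := by
  obtain ⟨g₀, rfl⟩ := ConjClasses.mk_surjective C
  have hclass : ∀ g : Γ, ConjClasses.mk g = ConjClasses.mk g₀ ↔ g ∈ orbit (ConjAct Γ) g₀ := by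
    simp [ConjClasses.mk_eq_mk_iff_isConj, ConjAct.mem_orbit_conjAct]
  simp_rw [hclass]
  split_ifs with hstable
  · exact sum_card_filter_smul_eq_of_mapsTo_orbit (G := ConjAct Γ) g₀ hstable
  · refine sum_eq_zero fun g hg =>
      card_filter_smul_eq_of_notMem_orbit (G := ConjAct Γ) fun hgq => hstable fun g' hg' => ?_
    rw [mem_filter_univ] at hg
    rw [ConjAct.mem_orbit_conjAct] at hg hg' hgq ⊢
    exact ((hg'.trans hg.symm).zpow q).trans (hgq.trans hg)

theorem stmt1_general (Γ : Type*) [Group Γ] [Fintype Γ] (q : ℤ) (e : Γ → ℕ)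
    (E : ConjClasses Γ → ℕ) (hE : ∀ g : Γ, E (ConjClasses.mk g) = e g)
    (t : ℚ) :
    (Fintype.card Γ : ℚ)⁻¹ *
      ∑ p : Γ × Γ, (if p.2 * p.1 * p.2⁻¹ = p.1 ^ q then t ^ e p.1 else 0)
    = ∑ᶠ C : ConjClasses Γ,
        (if ∀ g : Γ, ConjClasses.mk g = C → ConjClasses.mk (g ^ q) = C
          then t ^ E C else 0) := by
  have hΓ : (Fintype.card Γ : ℚ) ≠ 0 := Nat.cast_ne_zero.mpr Fintype.card_ne_zero
  rw [inv_mul_eq_iff_eq_mul₀ hΓ, finsum_eq_sum_of_fintype, mul_sum, Fintype.sum_prod_type]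
  simp_rw [← hE, sum_ite, sum_const_zero, add_zero, sum_const, nsmul_eq_mul]
  rw [← sum_fiberwise _ ConjClasses.mk]
  refine sum_congr rfl fun C _ => ?_
  rw [sum_congr rfl fun g hg => by rw [(mem_filter.mp hg).2], ← sum_mul, ← Nat.cast_sum,
    ConjClasses.sum_card_filter_conj_eq_zpow C q]
  split_ifs <;> simp

/-- For a finite group `Γ`, an integer `q`, and a function `e : Γ → ℕ` constant on
conjugacy classes, `(1/|Γ|) ∑_{(g,h) : h g h⁻¹ = g^q} t^{e g}` equals the sum of
`t^{e C}` over the conjugacy classes `C` stable under `x ↦ x^q`. -/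
theorem stmt1 (Γ : Type*) [Group Γ] [Fintype Γ] (q : ℤ) (e : Γ → ℕ)
    (he : ∀ g h : Γ, e (h * g * h⁻¹) = e g)
    (E : ConjClasses Γ → ℕ) (hE : ∀ g : Γ, E (ConjClasses.mk g) = e g)
    (t : ℚ) :
    (Fintype.card Γ : ℚ)⁻¹ *
      ∑ p : Γ × Γ, (if p.2 * p.1 * p.2⁻¹ = p.1 ^ q then t ^ e p.1 else 0)
    = ∑ᶠ C : ConjClasses Γ,
        (if ∀ g : Γ, ConjClasses.mk g = C → ConjClasses.mk (g ^ q) = C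
          then t ^ E C else 0) :=
  stmt1_general Γ q e E hE t
end

section
/- Define M_n(q) = q^{-n} Σ_{j=0}^{n} Σ_{i=0}^{j} P(j, i) P(n - j) q^{i}, where P(j,i) is the number of partitions of j into exactly i parts and P(m) is the number of partitions of m. Then in ℚ(q)[[x]], Σ_{n≥0} M_n(q) x^n = ∏_{i≥1} (1 - x^i q^{-i})^{-1} (1 - x^i q^{1-i})^{-1}. -/
/-!
Each factor `(1 - c x^i)⁻¹` is the geometric series `∑_m c^m x^{im}`, so the coefficient of `x^d`
in `∏_i (1 - a_i x^i)⁻¹` is `∑_{λ ⊢ d} ∏_{i ∈ λ} a_i` (for `d` at most the number of factors).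
With `a_i = t q^{-i}` this is `q^{-d} ∑_{λ ⊢ d} t^{ℓ(λ)}`. Taking `t = 1` and `t = q` and
multiplying the two series gives `q^{-n} ∑_j (∑_{λ ⊢ j} q^{ℓ(λ)}) P(n - j)`, and grouping the
partitions of `j` by their length `i` yields the `P(j, i) q^i`.
-/

open Finset PowerSeries
open scoped PowerSeries.WithPiTopology

theorem Nat.Partition.card_parts_le {n : ℕ} (p : n.Partition) : p.parts.card ≤ n := by
  simpa [p.parts_sum] using Multiset.card_nsmul_le_sum (s := p.parts) (a := 1)
    fun _ hx ↦ p.parts_pos hx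

theorem sum_pow_card_parts_eq {R : Type*} [CommSemiring R] (t : R) (n : ℕ) :
    ∑ p : n.Partition, t ^ p.parts.card
      = ∑ i ∈ range (n + 1), (#{p : n.Partition | p.parts.card = i} : R) * t ^ i := by
  rw [← sum_fiberwise_of_maps_to fun p _ ↦ mem_range_succ_iff.mpr p.card_parts_le]
  refine sum_congr rfl fun i _ ↦ ?_
  rw [sum_congr rfl fun p hp ↦ by rw [(mem_filter.mp hp).2], sum_const, nsmul_eq_mul]

variable {K : Type*} [Field K]

theorem inv_one_sub_C_mul_X_pow_eq [TopologicalSpace K] [IsTopologicalRing K] [T2Space K]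
    (a : K) {i : ℕ} (hi : 0 < i) :
    (1 - C a * X ^ i)⁻¹ = 1 + ∑' j, a ^ (j + 1) • (X : K⟦X⟧) ^ (i * (j + 1)) := by
  have hf : constantCoeff (C a * X ^ i : K⟦X⟧) = 0 := by simp [hi.ne']
  symm
  rw [PowerSeries.eq_inv_iff_mul_eq_one (by simp [hf])]
  convert WithPiTopology.tsum_pow_mul_one_sub_of_constantCoeff_eq_zero hf using 2
  rw [(WithPiTopology.summable_pow_of_constantCoeff_eq_zero hf).tsum_eq_zero_add]
  simp [mul_pow, ← pow_mul, smul_eq_C_mul]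

theorem coeff_prod_Icc_inv_one_sub_C_mul_X_pow (a : ℕ → K) {n d : ℕ} (hd : d ≤ n) :
    coeff d (∏ i ∈ Icc 1 n, (1 - C (a i) * X ^ i)⁻¹)
      = ∑ p : d.Partition, (p.parts.map a).prod := by
  classical
  let _ : TopologicalSpace K := ⊥
  have _ : DiscreteTopology K := ⟨rfl⟩
  -- With weights truncated at `n`, all but finitely many factors of `genFun` are `1`.
  let f : ℕ → ℕ → K := fun i c ↦ if i ≤ n then a i ^ c else 0
  have hfactor (i : ℕ) : 1 + ∑' j, f (i + 1) (j + 1) • (X : K⟦X⟧) ^ ((i + 1) * (j + 1))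
      = if i < n then (1 - C (a (i + 1)) * X ^ (i + 1))⁻¹ else 1 := by
    split_ifs with hi
    · simp [f, Nat.succ_le_of_lt hi, inv_one_sub_C_mul_X_pow_eq _ i.succ_pos]
    · simp [f, show ¬ i + 1 ≤ n by omega]
  have hgen := Nat.Partition.hasProd_genFun f
  simp only [hfactor] at hgen
  have hfin := hgen.unique (hasProd_prod_of_ne_finset_one (s := range n)
    fun i hi ↦ if_neg (by simpa using hi))
  rw [← Ico_add_one_right_eq_Icc, prod_Ico_eq_prod_range, Nat.add_sub_cancel,
    prod_congr rfl fun i _ ↦ by rw [add_comm 1 i],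
    ← (hfin.trans (prod_congr rfl fun i hi ↦ if_pos (mem_range.mp hi))),
    Nat.Partition.coeff_genFun]
  refine sum_congr rfl fun p _ ↦ ?_
  rw [prod_multiset_map_count, Finsupp.prod]
  simp only [Multiset.toFinsupp_support, Multiset.toFinsupp_apply]
  refine prod_congr rfl fun i hi ↦ if_pos ?_
  exact (Nat.Partition.le_of_mem_parts (Multiset.mem_toFinset.mp hi)).trans hd

theorem coeff_prod_Icc_inv_one_sub_C_mul_pow_mul_X_pow (t u : K) {n d : ℕ} (hd : d ≤ n) :
    coeff d (∏ i ∈ Icc 1 n, (1 - C (t * u ^ i) * X ^ i)⁻¹)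
      = u ^ d * ∑ p : d.Partition, t ^ p.parts.card := by
  rw [coeff_prod_Icc_inv_one_sub_C_mul_X_pow _ hd, mul_sum]
  refine sum_congr rfl fun p _ ↦ ?_
  rw [Multiset.prod_map_mul, Multiset.map_const', Multiset.prod_replicate, mul_comm]
  congr 1
  conv_rhs => rw [← p.parts_sum]
  induction p.parts using Multiset.induction_on <;> simp [pow_add, *]

/-- With `M_n(q) = q^{-n} ∑_{j=0}^n ∑_{i=0}^j P(j,i) P(n-j) q^i`, one has
`∑_n M_n(q) x^n = ∏_{i≥1} (1 - x^i q^{-i})⁻¹ (1 - x^i q^{1-i})⁻¹` in `ℚ(q)[[x]]`;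
stated coefficientwise (factors with `i > n` do not affect the coefficient of `x^n`). -/
theorem stmt7 (n : ℕ) :
    (PowerSeries.coeff n : PowerSeries (RatFunc ℚ) →ₗ[RatFunc ℚ] RatFunc ℚ)
      (∏ i ∈ Finset.Icc 1 n,
        ((1 - (PowerSeries.C : RatFunc ℚ →+* PowerSeries (RatFunc ℚ)) ((RatFunc.X : RatFunc ℚ) ^ (-(i : ℤ)))
            * PowerSeries.X ^ i)⁻¹
          * (1 - (PowerSeries.C : RatFunc ℚ →+* PowerSeries (RatFunc ℚ)) ((RatFunc.X : RatFunc ℚ) ^ (1 - (i : ℤ)))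
            * PowerSeries.X ^ i)⁻¹))
    = (RatFunc.X : RatFunc ℚ) ^ (-(n : ℤ)) *
        ∑ j ∈ Finset.range (n + 1), ∑ i ∈ Finset.range (j + 1),
          ((Finset.univ.filter fun p : Nat.Partition j => p.parts.card = i).card : RatFunc ℚ)
            * (Fintype.card (Nat.Partition (n - j)) : RatFunc ℚ)
            * (RatFunc.X : RatFunc ℚ) ^ (i : ℕ) := by
  set q : RatFunc ℚ := RatFunc.X
  have hq : q ≠ 0 := RatFunc.X_ne_zero
  have hzpow (c : ℤ) (i : ℕ) : q ^ (c - i) = q ^ c * q⁻¹ ^ i := by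
    rw [zpow_sub₀ hq, zpow_natCast, div_eq_mul_inv, inv_pow]
  simp only [neg_eq_zero_sub, hzpow, zpow_zero, zpow_one, prod_mul_distrib]
  rw [mul_comm, coeff_mul, Nat.sum_antidiagonal_eq_sum_range_succ_mk, mul_sum]
  refine sum_congr rfl fun j hj ↦ ?_
  have hjn : j ≤ n := mem_range_succ_iff.mp hj
  rw [coeff_prod_Icc_inv_one_sub_C_mul_pow_mul_X_pow _ _ hjn,
    coeff_prod_Icc_inv_one_sub_C_mul_pow_mul_X_pow _ _ (n.sub_le j), sum_pow_card_parts_eq]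
  simp only [one_pow, sum_const, card_univ, nsmul_eq_mul, mul_one]
  rw [← pow_mul_pow_sub q⁻¹ hjn]
  simp only [mul_sum, sum_mul]
  exact sum_congr rfl fun i _ ↦ by ring
end

section
/- Let M/L/K be a tower of finite field extensions with A = (a₁,...,a_m) a K-basis of L and B = (b₁,...,b_n) an L-basis of M, so that C = (a_i b_j) is a K-basis of M. If all the extensions are separable, then the discriminant satisfies disc_{M/K}(C) = disc_{L/K}(A)^{[M:L]} · Norm_{L/K}(disc_{M/L}(B)). -/
/-!
Index the product basis by `κ × ι`, so that its trace matrix is a `κ × κ` block matrix with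
`ι × ι` blocks. By transitivity of the trace, the `(j, l)` block has entries
`Tr_{L/K}(a_i a_k t)` with `t = Tr_{M/L}(b_j b_l)`, i.e. it is `traceMatrix A` times the matrix
of multiplication by `t`. Hence the trace matrix is the block-diagonal matrix with copies of
`traceMatrix A` times the block matrix obtained by applying `leftMulMatrix A` entrywise to
`traceMatrix B`. The determinant of the latter is `Norm_{L/K}(det (traceMatrix B))` by
Silvester's theorem on block matrices with commuting blocks (`Matrix.det_det`).
-/

open Matrix Algebra Module

theorem Algebra.traceMatrix_mul_leftMulMatrix {R S ι : Type*} [CommRing R] [CommRing S]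
    [Algebra R S] [Fintype ι] [DecidableEq ι] (b : Basis ι R S) (x : S) :
    traceMatrix R b * leftMulMatrix b x = of fun i j => trace R S (b i * b j * x) := by
  ext i j
  have hcol := congr_fun (traceMatrix_of_basis_mulVec b (x * b j)) i
  simp only [mulVec, dotProduct, Basis.equivFun_apply, ← leftMulMatrix_eq_repr_mul] at hcol
  rw [mul_apply, hcol, of_apply]
  congr 1
  ring

theorem Algebra.traceMatrix_smulTower' {R S A ι κ : Type*} [CommRing R] [CommRing S]
    [CommRing A] [Algebra R S] [Algebra S A] [Algebra R A] [IsScalarTower R S A]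
    [Fintype ι] [Fintype κ] [DecidableEq ι] [DecidableEq κ]
    (b : Basis ι R S) (c : Basis κ S A) :
    traceMatrix R (b.smulTower' c) =
      comp κ κ ι ι R
        (diagonal (fun _ => traceMatrix R b) * (traceMatrix S c).map (leftMulMatrix b)) := by
  ext ⟨j, i⟩ ⟨l, k⟩
  rw [comp_apply, diagonal_mul, map_apply, traceMatrix_mul_leftMulMatrix, of_apply,
    traceMatrix_apply, traceForm_apply, Basis.smulTower'_apply, Basis.smulTower'_apply,
    smul_mul_smul_comm, ← trace_trace_of_basis b c, LinearMap.map_smul_of_tower, smul_eq_mul,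
    traceMatrix_apply, traceForm_apply]

theorem Algebra.norm_det_eq_det_comp_map_leftMulMatrix {R S ι κ : Type*} [CommRing R]
    [CommRing S] [Algebra R S] [Fintype ι] [DecidableEq ι] [Fintype κ] [DecidableEq κ]
    (b : Basis ι R S) (T : Matrix κ κ S) :
    norm R T.det = (comp κ κ ι ι R (T.map (leftMulMatrix b))).det := by
  rw [norm_eq_matrix_det b]
  exact det_det T (leftMulMatrix b : S →+* Matrix ι ι R)

theorem Matrix.det_comp_diagonal_const {R ι κ : Type*} [CommRing R] [Fintype ι] [DecidableEq ι]
    [Fintype κ] [DecidableEq κ] (X : Matrix ι ι R) :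
    (comp κ κ ι ι R (diagonal fun _ => X)).det = X.det ^ Fintype.card κ := by
  have : comp κ κ ι ι R (diagonal fun _ => X) =
      reindex (Equiv.prodComm ι κ) (Equiv.prodComm ι κ) (blockDiagonal fun _ => X) := by
    ext ⟨j, i⟩ ⟨l, k⟩
    by_cases h : j = l <;> simp [blockDiagonal_apply, h]
  rw [this, det_reindex_self, det_blockDiagonal, Finset.prod_const, Finset.card_univ]

theorem Algebra.discr_smulTower {R S A ι κ : Type*} [CommRing R] [CommRing S] [CommRing A]
    [Algebra R S] [Algebra S A] [Algebra R A] [IsScalarTower R S A]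
    [Fintype ι] [Fintype κ] [DecidableEq ι] [DecidableEq κ]
    (b : Basis ι R S) (c : Basis κ S A) :
    discr R (b.smulTower c) = discr R b ^ Fintype.card κ * norm R (discr S c) := by
  rw [← discr_reindex R (b.smulTower c) (Equiv.prodComm ι κ), ← Basis.coe_reindex,
    ← Basis.smulTower', discr_def, traceMatrix_smulTower', ← compRingEquiv_apply, map_mul,
    det_mul, compRingEquiv_apply, compRingEquiv_apply, det_comp_diagonal_const,
    ← norm_det_eq_det_comp_map_leftMulMatrix, discr_def, discr_def]

theorem stmt12_general (K L M : Type*) [Field K] [Field L] [Field M]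
    [Algebra K L] [Algebra L M] [Algebra K M] [IsScalarTower K L M]
    {ι κ : Type*} [Fintype ι] [Fintype κ] [DecidableEq ι] [DecidableEq κ]
    (A : Module.Basis ι K L) (B : Module.Basis κ L M) :
    Algebra.discr K ⇑(A.smulTower B)
      = Algebra.discr K ⇑A ^ Module.finrank L M
        * Algebra.norm K (Algebra.discr L ⇑B) := by
  rw [finrank_eq_card_basis B, discr_smulTower]

/-- Tower formula for discriminants: for a tower `M/L/K` of finite separable field
extensions, a `K`-basis `A` of `L` and an `L`-basis `B` of `M`, the combined
`K`-basis `C = (a_i b_j)` of `M` satisfies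
`disc_{M/K}(C) = disc_{L/K}(A)^{[M:L]} · Norm_{L/K}(disc_{M/L}(B))`. -/
theorem stmt12 (K L M : Type*) [Field K] [Field L] [Field M]
    [Algebra K L] [Algebra L M] [Algebra K M] [IsScalarTower K L M]
    [FiniteDimensional K L] [FiniteDimensional L M]
    [Algebra.IsSeparable K L] [Algebra.IsSeparable L M] [Algebra.IsSeparable K M]
    {ι κ : Type*} [Fintype ι] [Fintype κ] [DecidableEq ι] [DecidableEq κ]
    (A : Module.Basis ι K L) (B : Module.Basis κ L M) :
    Algebra.discr K ⇑(A.smulTower B)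
      = Algebra.discr K ⇑A ^ Module.finrank L M
        * Algebra.norm K (Algebra.discr L ⇑B) :=
  stmt12_general K L M A B
end
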